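/- For any hypothesis g in a symmetric hypothesis space H, the equalized odds distance in the target domain satisfies Δ_{EO,T}(g) ≤ Δ_{EO,S}(g) + (1/2)[d_{HΔH}(D_{T_0^0}, D_{S_0^0}) + d_{HΔH}(D_{T_1^0}, D_{S_1^0}) + d_{HΔH}(D_{T_0^1}, D_{S_0^1}) + d_{HΔH}(D_{T_1^1}, D_{S_1^1})] + Σ_{α∈{0,1}, l∈{0,1}} λ_α^l, where λ_α^l = ε_{S_α^l}(g*, f) + ε_{T_α^l}(g*, f) for any fixed g* ∈ H. -/

import Mathlib

/-!
For a binary classifier `g`, both halves of the equalized-odds distance are differences of errors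
`ε(g, f)`: on a group with label `0` the expectation of `g` is `ε(g, f)`, on a group with label `1`
the expectation of `1 - g` is. Hence it suffices to compare `ε_T(g, f)` with `ε_S(g, f)` group by
group. By the triangle inequality for `ε`, replacing `f` by the reference classifier `g*` costs at
most `ε(g*, f)` in each domain, and `ε(g, g*)` is the probability of `{g ≠ g*}`, whose values under
the two domains differ by at most `½ d_{HΔH}`.
-/

open MeasureTheory

/-- Disagreement error `ε_D(h,h') = E_{z∼D}[|h z − h' z|]`. -/
noncomputable def errE {Z : Type*} [MeasurableSpace Z] (μ : Measure Z) (h h' : Z → ℝ) : ℝ :=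
  ∫ z, |h z - h' z| ∂μ

/-- `d_{HΔH}(D,D') = 2 sup_{h,h'∈H} |Pr_D[h≠h'] − Pr_{D'}[h≠h']|`. -/
noncomputable def dHH {Z : Type*} [MeasurableSpace Z] (H : Set (Z → ℝ))
    (μ ν : Measure Z) : ℝ :=
  2 * ⨆ p : H × H,
    |(μ {z | p.1.1 z ≠ p.2.1 z}).toReal - (ν {z | p.1.1 z ≠ p.2.1 z}).toReal|

/-- Equalized odds distance
`Δ_{EO,D}(g) = |E_{D_0^0}[g] − E_{D_1^0}[g]| + |E_{D_0^1}[1−g] − E_{D_1^1}[1−g]|`. -/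
noncomputable def eoDiff {Z : Type*} [MeasurableSpace Z]
    (μ00 μ10 μ01 μ11 : Measure Z) (g : Z → ℝ) : ℝ :=
  |(∫ z, g z ∂μ00) - ∫ z, g z ∂μ10| +
    |(∫ z, (1 - g z) ∂μ01) - ∫ z, (1 - g z) ∂μ11|

section DisagreementError

variable {Z : Type*} [MeasurableSpace Z] {μ : Measure Z}

lemma errE_comm (h h' : Z → ℝ) : errE μ h h' = errE μ h' h := by
  simp only [errE, abs_sub_comm]

lemma errE_congr_ae_right {h f f' : Z → ℝ} (hf : f =ᵐ[μ] f') : errE μ h f = errE μ h f' :=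
  integral_congr_ae (hf.mono fun z hz => by simp only [hz])

lemma integrable_abs_sub_of_binary [IsFiniteMeasure μ] {h h' : Z → ℝ}
    (hb : ∀ z, h z = 0 ∨ h z = 1) (hb' : ∀ z, h' z = 0 ∨ h' z = 1)
    (hm : Measurable h) (hm' : Measurable h') :
    Integrable (fun z => |h z - h' z|) μ := by
  refine Integrable.of_bound (hm.sub hm').abs.aestronglyMeasurable 1 (ae_of_all _ fun z => ?_)
  rcases hb z with h0 | h0 <;> rcases hb' z with h1 | h1 <;> norm_num [h0, h1]

lemma errE_le_errE_add_errE {h₁ h₂ h₃ : Z → ℝ}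
    (h₁₂ : Integrable (fun z => |h₁ z - h₂ z|) μ) (h₂₃ : Integrable (fun z => |h₂ z - h₃ z|) μ) :
    errE μ h₁ h₃ ≤ errE μ h₁ h₂ + errE μ h₂ h₃ := by
  rw [errE, errE, errE, ← integral_add h₁₂ h₂₃]
  exact integral_mono_of_nonneg (ae_of_all _ fun z => abs_nonneg _) (h₁₂.add h₂₃)
    (ae_of_all _ fun z => abs_sub_le _ _ _)

lemma errE_eq_measureReal {h h' : Z → ℝ}
    (hb : ∀ z, h z = 0 ∨ h z = 1) (hb' : ∀ z, h' z = 0 ∨ h' z = 1)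
    (hm : Measurable h) (hm' : Measurable h') :
    errE μ h h' = μ.real {z | h z ≠ h' z} := by
  have hind : (fun z => |h z - h' z|) = {z | h z ≠ h' z}.indicator 1 := by
    funext z
    rcases hb z with h0 | h0 <;> rcases hb' z with h1 | h1 <;>
      norm_num [Set.indicator, h0, h1]
  rw [errE, hind]
  exact integral_indicator_one (measurableSet_eq_fun hm hm').compl

lemma abs_errE_sub_errE_le [IsFiniteMeasure μ] {h h' k : Z → ℝ}
    (hb : ∀ z, h z = 0 ∨ h z = 1) (hb' : ∀ z, h' z = 0 ∨ h' z = 1)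
    (hbk : ∀ z, k z = 0 ∨ k z = 1) (hm : Measurable h) (hm' : Measurable h')
    (hmk : Measurable k) :
    |errE μ h k - errE μ h h'| ≤ errE μ h' k := by
  have hhh' := integrable_abs_sub_of_binary (μ := μ) hb hb' hm hm'
  have hh'k := integrable_abs_sub_of_binary (μ := μ) hb' hbk hm' hmk
  have hkh' := integrable_abs_sub_of_binary (μ := μ) hbk hb' hmk hm'
  have hhk := integrable_abs_sub_of_binary (μ := μ) hb hbk hm hmk
  have h₁ := errE_le_errE_add_errE hhh' hh'k
  have h₂ := errE_le_errE_add_errE hhk hkh'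
  rw [errE_comm k h'] at h₂
  exact abs_sub_le_iff.mpr ⟨by linarith, by linarith⟩

lemma integral_eq_errE_zero {g : Z → ℝ} (hg : ∀ z, 0 ≤ g z) :
    ∫ z, g z ∂μ = errE μ g fun _ => 0 := by
  simp only [errE, sub_zero, abs_of_nonneg (hg _)]

lemma integral_one_sub_eq_errE_one {g : Z → ℝ} (hg : ∀ z, g z ≤ 1) :
    ∫ z, (1 - g z) ∂μ = errE μ g fun _ => 1 := by
  simp only [errE, abs_sub_comm (g _), abs_of_nonneg (sub_nonneg.mpr (hg _))]

end DisagreementError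

section DomainShift

variable {Z : Type*} [MeasurableSpace Z] (H : Set (Z → ℝ)) {μ ν : Measure Z}
  [IsProbabilityMeasure μ] [IsProbabilityMeasure ν]

lemma abs_errE_sub_le_dHH {h h' : Z → ℝ} (hh : h ∈ H) (hh' : h' ∈ H)
    (hb : ∀ z, h z = 0 ∨ h z = 1) (hb' : ∀ z, h' z = 0 ∨ h' z = 1)
    (hm : Measurable h) (hm' : Measurable h') :
    |errE μ h h' - errE ν h h'| ≤ (1 / 2) * dHH H μ ν := by
  have hbdd : BddAbove (Set.range fun p : H × H =>
      |(μ {z | p.1.1 z ≠ p.2.1 z}).toReal - (ν {z | p.1.1 z ≠ p.2.1 z}).toReal|) :=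
    ⟨1, Set.forall_mem_range.mpr fun _ => abs_sub_le_of_nonneg_of_le measureReal_nonneg
      measureReal_le_one measureReal_nonneg measureReal_le_one⟩
  have hle : |μ.real {z | h z ≠ h' z} - ν.real {z | h z ≠ h' z}| ≤ ⨆ p : H × H,
      |(μ {z | p.1.1 z ≠ p.2.1 z}).toReal - (ν {z | p.1.1 z ≠ p.2.1 z}).toReal| :=
    le_ciSup hbdd ((⟨h, hh⟩, ⟨h', hh'⟩) : H × H)
  rw [errE_eq_measureReal hb hb' hm hm', errE_eq_measureReal hb hb' hm hm', dHH]
  linarith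

lemma abs_errE_sub_le_dHH_add (hbin : ∀ h ∈ H, ∀ z, h z = 0 ∨ h z = 1)
    (hmeas : ∀ h ∈ H, Measurable h) {g gs : Z → ℝ} (hg : g ∈ H) (hgs : gs ∈ H)
    {f : Z → ℝ} {c : ℝ} (hc : c = 0 ∨ c = 1) (hfμ : f =ᵐ[μ] fun _ => c)
    (hfν : f =ᵐ[ν] fun _ => c) :
    |errE μ g f - errE ν g f| ≤ (1 / 2) * dHH H μ ν + (errE ν gs f + errE μ gs f) := by
  have hdist : ∀ (ρ : Measure Z) [IsProbabilityMeasure ρ],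
      |errE ρ g (fun _ => c) - errE ρ g gs| ≤ errE ρ gs fun _ => c := fun ρ _ =>
    abs_errE_sub_errE_le (hbin g hg) (hbin gs hgs) (fun _ => hc) (hmeas g hg) (hmeas gs hgs)
      measurable_const
  have hshift := abs_errE_sub_le_dHH H (μ := μ) (ν := ν) hg hgs (hbin g hg) (hbin gs hgs)
    (hmeas g hg) (hmeas gs hgs)
  rw [errE_congr_ae_right hfμ, errE_congr_ae_right hfν, errE_congr_ae_right hfμ,
    errE_congr_ae_right hfν]
  linarith [abs_sub_le (errE μ g fun _ => c) (errE μ g gs) (errE ν g fun _ => c),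
    abs_sub_le (errE μ g gs) (errE ν g gs) (errE ν g fun _ => c),
    abs_sub_comm (errE ν g gs) (errE ν g fun _ => c), hdist μ, hdist ν]

end DomainShift

lemma eoDiff_eq_errE {Z : Type*} [MeasurableSpace Z] {μ00 μ10 μ01 μ11 : Measure Z}
    {g f : Z → ℝ} (hb : ∀ z, g z = 0 ∨ g z = 1)
    (hf00 : f =ᵐ[μ00] fun _ => 0) (hf10 : f =ᵐ[μ10] fun _ => 0)
    (hf01 : f =ᵐ[μ01] fun _ => 1) (hf11 : f =ᵐ[μ11] fun _ => 1) :
    eoDiff μ00 μ10 μ01 μ11 g =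
      |errE μ00 g f - errE μ10 g f| + |errE μ01 g f - errE μ11 g f| := by
  have hg0 : ∀ z, 0 ≤ g z := fun z => by rcases hb z with h | h <;> norm_num [h]
  have hg1 : ∀ z, g z ≤ 1 := fun z => by rcases hb z with h | h <;> norm_num [h]
  rw [eoDiff, integral_eq_errE_zero hg0, integral_eq_errE_zero hg0,
    integral_one_sub_eq_errE_one hg1, integral_one_sub_eq_errE_one hg1,
    errE_congr_ae_right hf00, errE_congr_ae_right hf10, errE_congr_ae_right hf01,
    errE_congr_ae_right hf11]

lemma abs_sub_le_abs_sub_add (a b c d : ℝ) : |a - b| ≤ |c - d| + (|a - c| + |b - d|) := by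
  have h := dist_dist_dist_le a b c d
  simp only [Real.dist_eq] at h
  linarith [le_abs_self (|a - b| - |c - d|)]

theorem stmt4_general {Z : Type*} [MeasurableSpace Z] (H : Set (Z → ℝ))
    (hbin : ∀ h ∈ H, ∀ z, h z = 0 ∨ h z = 1)
    (hmeas : ∀ h ∈ H, Measurable h)
    (μS00 μS10 μS01 μS11 μT00 μT10 μT01 μT11 : Measure Z)
    [IsProbabilityMeasure μS00] [IsProbabilityMeasure μS10]
    [IsProbabilityMeasure μS01] [IsProbabilityMeasure μS11]
    [IsProbabilityMeasure μT00] [IsProbabilityMeasure μT10]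
    [IsProbabilityMeasure μT01] [IsProbabilityMeasure μT11]
    (f : Z → ℝ)
    (hfS00 : f =ᵐ[μS00] fun _ => 0) (hfS10 : f =ᵐ[μS10] fun _ => 0)
    (hfS01 : f =ᵐ[μS01] fun _ => 1) (hfS11 : f =ᵐ[μS11] fun _ => 1)
    (hfT00 : f =ᵐ[μT00] fun _ => 0) (hfT10 : f =ᵐ[μT10] fun _ => 0)
    (hfT01 : f =ᵐ[μT01] fun _ => 1) (hfT11 : f =ᵐ[μT11] fun _ => 1)
    (g : Z → ℝ) (hg : g ∈ H) (gs : Z → ℝ) (hgs : gs ∈ H) :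
    eoDiff μT00 μT10 μT01 μT11 g ≤
      eoDiff μS00 μS10 μS01 μS11 g +
        (1 / 2) * (dHH H μT00 μS00 + dHH H μT10 μS10 +
          dHH H μT01 μS01 + dHH H μT11 μS11) +
        ((errE μS00 gs f + errE μT00 gs f) + (errE μS10 gs f + errE μT10 gs f) +
          (errE μS01 gs f + errE μT01 gs f) + (errE μS11 gs f + errE μT11 gs f)) := by
  rw [eoDiff_eq_errE (hbin g hg) hfT00 hfT10 hfT01 hfT11,
    eoDiff_eq_errE (hbin g hg) hfS00 hfS10 hfS01 hfS11]
  have h00 := abs_errE_sub_le_dHH_add H hbin hmeas hg hgs (Or.inl rfl) hfT00 hfS00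
  have h10 := abs_errE_sub_le_dHH_add H hbin hmeas hg hgs (Or.inl rfl) hfT10 hfS10
  have h01 := abs_errE_sub_le_dHH_add H hbin hmeas hg hgs (Or.inr rfl) hfT01 hfS01
  have h11 := abs_errE_sub_le_dHH_add H hbin hmeas hg hgs (Or.inr rfl) hfT11 hfS11
  linarith [abs_sub_le_abs_sub_add (errE μT00 g f) (errE μT10 g f)
      (errE μS00 g f) (errE μS10 g f),
    abs_sub_le_abs_sub_add (errE μT01 g f) (errE μT11 g f) (errE μS01 g f) (errE μS11 g f)]

theorem stmt4 {Z : Type*} [MeasurableSpace Z] (H : Set (Z → ℝ))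
    (hbin : ∀ h ∈ H, ∀ z, h z = 0 ∨ h z = 1)
    (hmeas : ∀ h ∈ H, Measurable h)
    (hsym : ∀ h ∈ H, (fun z => 1 - h z) ∈ H)
    (μS00 μS10 μS01 μS11 μT00 μT10 μT01 μT11 : Measure Z)
    [IsProbabilityMeasure μS00] [IsProbabilityMeasure μS10]
    [IsProbabilityMeasure μS01] [IsProbabilityMeasure μS11]
    [IsProbabilityMeasure μT00] [IsProbabilityMeasure μT10]
    [IsProbabilityMeasure μT01] [IsProbabilityMeasure μT11]
    (f : Z → ℝ)
    (hfS00 : f =ᵐ[μS00] fun _ => 0) (hfS10 : f =ᵐ[μS10] fun _ => 0)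
    (hfS01 : f =ᵐ[μS01] fun _ => 1) (hfS11 : f =ᵐ[μS11] fun _ => 1)
    (hfT00 : f =ᵐ[μT00] fun _ => 0) (hfT10 : f =ᵐ[μT10] fun _ => 0)
    (hfT01 : f =ᵐ[μT01] fun _ => 1) (hfT11 : f =ᵐ[μT11] fun _ => 1)
    (g : Z → ℝ) (hg : g ∈ H) (gs : Z → ℝ) (hgs : gs ∈ H) :
    eoDiff μT00 μT10 μT01 μT11 g ≤
      eoDiff μS00 μS10 μS01 μS11 g +
        (1 / 2) * (dHH H μT00 μS00 + dHH H μT10 μS10 +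
          dHH H μT01 μS01 + dHH H μT11 μS11) +
        ((errE μS00 gs f + errE μT00 gs f) + (errE μS10 gs f + errE μT10 gs f) +
          (errE μS01 gs f + errE μT01 gs f) + (errE μS11 gs f + errE μT11 gs f)) :=
  stmt4_general H hbin hmeas μS00 μS10 μS01 μS11 μT00 μT10 μT01 μT11 f hfS00 hfS10 hfS01 hfS11 hfT00
    hfT10 hfT01 hfT11 g hg gs hgs
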